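/- arXiv:2009.09451 — 8 statements merged into one kernel-verified Lean document; each statement's English description precedes it below -/
import Mathlib

section
/- Let Δ ≥ 0, ε > 0 and b ≥ Δ/ε. For all m, m' ∈ ℝ with |m − m'| ≤ Δ and every measurable set S ⊆ ℝ, ∫_S (1/(2b))·exp(−|x − m|/b) dx ≤ exp(ε) · ∫_S (1/(2b))·exp(−|x − m'|/b) dx. (The Laplace mechanism with scale b ≥ Δq/ε is ε-differentially private.) -/
/-!
Pointwise, the triangle inequality `|x - m'| ≤ |x - m| + |m - m'|` bounds the ratio of the two
Laplace densities by `exp (|m - m'| / b) ≤ exp ε`; integrating this bound over `S` gives the claim.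
-/

open MeasureTheory Real

lemma integrable_exp_neg_abs_div {b : ℝ} (hb : 0 < b) :
    Integrable fun x : ℝ => exp (-|x| / b) := by
  have hIoi : IntegrableOn (fun x : ℝ => exp (-|x| / b)) (Set.Ioi 0) := by
    refine (exp_neg_integrableOn_Ioi 0 (one_div_pos.2 hb)).congr_fun
      (fun x hx => ?_) measurableSet_Ioi
    rw [abs_of_pos hx]
    ring_nf
  rw [← integrableOn_univ, ← Set.Iio_union_Ici (a := (0 : ℝ)), integrableOn_union,
    integrableOn_Ici_iff_integrableOn_Ioi]
  refine ⟨?_, hIoi⟩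
  -- the integrand is even, so `x ↦ -x` carries the right half-line onto the left one
  rw [← (Measure.measurePreserving_neg volume).integrableOn_comp_preimage
    (Homeomorph.neg ℝ).measurableEmbedding]
  simpa only [Function.comp_def, abs_neg, Set.neg_preimage, Set.neg_Iio, neg_zero] using hIoi

noncomputable def laplacePDF (b m x : ℝ) : ℝ :=
  1 / (2 * b) * exp (-|x - m| / b)

lemma laplacePDF_nonneg {b : ℝ} (hb : 0 < b) (m x : ℝ) : 0 ≤ laplacePDF b m x := by
  unfold laplacePDF
  positivity

lemma integrable_laplacePDF {b : ℝ} (hb : 0 < b) (m : ℝ) : Integrable (laplacePDF b m) :=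
  ((integrable_exp_neg_abs_div hb).comp_sub_right m).const_mul _

lemma laplacePDF_le_exp_mul {b : ℝ} (hb : 0 < b) (m m' x : ℝ) :
    laplacePDF b m x ≤ exp (|m - m'| / b) * laplacePDF b m' x := by
  unfold laplacePDF
  rw [mul_left_comm, ← exp_add]
  gcongr
  rw [← add_div, div_le_div_iff_of_pos_right hb]
  linarith [abs_sub_le x m m']

lemma setIntegral_laplacePDF_le {b : ℝ} (hb : 0 < b) (m m' : ℝ) (S : Set ℝ) :
    ∫ x in S, laplacePDF b m x ≤ exp (|m - m'| / b) * ∫ x in S, laplacePDF b m' x := by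
  rw [← integral_const_mul]
  exact setIntegral_mono (integrable_laplacePDF hb m).integrableOn
    ((integrable_laplacePDF hb m').const_mul _).integrableOn (laplacePDF_le_exp_mul hb m m')

theorem laplace_mechanism_dp_general (Δ ε b : ℝ) (hε : 0 < ε) (hb : Δ / ε ≤ b)
    (m m' : ℝ) (hmm : |m - m'| ≤ Δ) (S : Set ℝ) :
    (∫ x in S, (1 / (2 * b)) * Real.exp (-|x - m| / b)) ≤
      Real.exp ε * ∫ x in S, (1 / (2 * b)) * Real.exp (-|x - m'| / b) := by
  have hΔ : 0 ≤ Δ := (abs_nonneg _).trans hmm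
  rcases (div_nonneg hΔ hε.le |>.trans hb).eq_or_lt with rfl | hb_pos
  · simp
  have hloss : |m - m'| / b ≤ ε := by
    rw [div_le_iff₀ hε] at hb
    rw [div_le_iff₀ hb_pos]
    linarith
  calc ∫ x in S, laplacePDF b m x
      ≤ exp (|m - m'| / b) * ∫ x in S, laplacePDF b m' x :=
        setIntegral_laplacePDF_le hb_pos m m' S
    _ ≤ exp ε * ∫ x in S, laplacePDF b m' x := by
      gcongr
      exact integral_nonneg (laplacePDF_nonneg hb_pos m')

/-- The Laplace mechanism with scale `b ≥ Δq/ε` is `ε`-differentially private. -/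
theorem laplace_mechanism_dp (Δ ε b : ℝ) (hΔ : 0 ≤ Δ) (hε : 0 < ε) (hb : Δ / ε ≤ b)
    (m m' : ℝ) (hmm : |m - m'| ≤ Δ) (S : Set ℝ) (hS : MeasurableSet S) :
    (∫ x in S, (1 / (2 * b)) * Real.exp (-|x - m| / b)) ≤
      Real.exp ε * ∫ x in S, (1 / (2 * b)) * Real.exp (-|x - m'| / b) :=
  laplace_mechanism_dp_general Δ ε b hε hb m m' hmm S
end

section
/- Let (Ω, μ) be a probability space and u : Ω → ℝ measurable with u > 0 μ-almost everywhere and u integrable, and let Δ ≥ 0. Define g_m(x) = (1/2)·E[u·exp(−u·|x − m|)]. Then for all m, m' ∈ ℝ with |m − m'| ≤ Δ and every measurable set S ⊆ ℝ, ∫_S g_m(x) dx ≤ (E[u] / E[u·exp(−Δ·u)]) · ∫_S g_{m'}(x) dx. Equivalently, the R²DP Laplace mechanism is ln( E[1/b] / M'_{1/b}(−Δq) )-differentially private, where M'_{1/b}(t) = E[u·exp(t·u)] is the derivative of the moment generating function of u = 1/b. -/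
open MeasureTheory Real Set

/-!
Write `M'(t) = E[u e^{tu}]`, so that `2 g_m(x) = M'(-|x - m|)`. Since `e^{-au}` and `e^{-Δu}` are
both antitone in `u`, Chebyshev's integral inequality for the weight `u dμ` gives
`M'(-a) M'(-Δ) ≤ E[u] M'(-a - Δ)`, and `M'` is monotone on `t ≤ 0`; with `a = |x - m|` and
`|x - m'| ≤ a + Δ` this bounds `g_m(x)` pointwise by `E[u] / M'(-Δ) · g_{m'}(x)`, which is then
integrated over `S`.
-/

lemma integral_exp_neg_mul_abs_sub {b : ℝ} (hb : 0 < b) (c : ℝ) :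
    ∫ x, exp (-b * |x - c|) = 2 / b := by
  rw [integral_sub_right_eq_self (fun x => exp (-b * |x|)),
    integral_comp_abs (f := fun x => exp (-b * x)), integral_exp_mul_Ioi (by linarith)]
  field_simp
  simp

lemma integrable_exp_neg_mul_abs_sub {b : ℝ} (hb : 0 < b) (c : ℝ) :
    Integrable fun x => exp (-b * |x - c|) :=
  .of_integral_ne_zero <| by rw [integral_exp_neg_mul_abs_sub hb]; positivity

theorem Monovary.integral_mul_integral_le_integral_mul_integral {Ω : Type*} [MeasurableSpace Ω]
    {μ : Measure Ω} [SFinite μ] {w f g : Ω → ℝ} (hfg : Monovary f g) (hw : 0 ≤ᵐ[μ] w)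
    (hwi : Integrable w μ) (hwf : Integrable (fun ω => w ω * f ω) μ)
    (hwg : Integrable (fun ω => w ω * g ω) μ)
    (hwfg : Integrable (fun ω => w ω * (f ω * g ω)) μ) :
    (∫ ω, w ω * f ω ∂μ) * (∫ ω, w ω * g ω ∂μ) ≤
      (∫ ω, w ω ∂μ) * ∫ ω, w ω * (f ω * g ω) ∂μ := by
  -- integrate `w x * w y * (f x - f y) * (g x - g y) ≥ 0` over `μ.prod μ`
  have hw₂ : ∀ᵐ p ∂μ.prod μ, 0 ≤ w p.1 * w p.2 := by
    filter_upwards [Measure.quasiMeasurePreserving_fst.ae hw,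
      Measure.quasiMeasurePreserving_snd.ae hw] with p h₁ h₂
    exact mul_nonneg h₁ h₂
  have hA : Integrable (fun p : Ω × Ω =>
      w p.1 * (f p.1 * g p.1) * w p.2 + w p.1 * (w p.2 * (f p.2 * g p.2))) (μ.prod μ) :=
    (hwfg.mul_prod hwi).add (hwi.mul_prod hwfg)
  have hB : Integrable (fun p : Ω × Ω =>
      w p.1 * f p.1 * (w p.2 * g p.2) + w p.1 * g p.1 * (w p.2 * f p.2)) (μ.prod μ) :=
    (hwf.mul_prod hwg).add (hwg.mul_prod hwf)
  have key : 0 ≤ ∫ p, (w p.1 * (f p.1 * g p.1) * w p.2 + w p.1 * (w p.2 * (f p.2 * g p.2))) -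
      (w p.1 * f p.1 * (w p.2 * g p.2) + w p.1 * g p.1 * (w p.2 * f p.2)) ∂μ.prod μ := by
    refine integral_nonneg_of_ae ?_
    filter_upwards [hw₂] with p hp
    have := mul_nonneg hp (hfg.sub_mul_sub_nonneg p.1 p.2)
    simp only [Pi.zero_apply]
    linarith
  rw [integral_sub hA hB, integral_add (hwfg.mul_prod hwi) (hwi.mul_prod hwfg),
    integral_add (hwf.mul_prod hwg) (hwg.mul_prod hwf),
    integral_prod_mul (fun ω => w ω * (f ω * g ω)) w,
    integral_prod_mul w (fun ω => w ω * (f ω * g ω)),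
    integral_prod_mul (fun ω => w ω * f ω) (fun ω => w ω * g ω),
    integral_prod_mul (fun ω => w ω * g ω) (fun ω => w ω * f ω)] at key
  linarith

lemma monovary_exp_mul_of_nonpos {ι : Type*} {u : ι → ℝ} {s t : ℝ} (hs : s ≤ 0)
    (ht : t ≤ 0) :
    Monovary (fun i => exp (s * u i)) (fun i => exp (t * u i)) := by
  intro i j hij
  have : t * u i < t * u j := exp_lt_exp.1 hij
  have : u j < u i := by nlinarith
  exact exp_le_exp.2 (by nlinarith)

section MgfDeriv

variable {Ω : Type*} [MeasurableSpace Ω] {μ : Measure Ω} {u : Ω → ℝ}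

/-- `M'_u(t) = E[u e^{tu}]`, the derivative of the moment generating function of `u`. -/
noncomputable def mgfDeriv (u : Ω → ℝ) (μ : Measure Ω) (t : ℝ) : ℝ :=
  ∫ ω, u ω * exp (t * u ω) ∂μ

@[simp]
lemma mgfDeriv_zero : mgfDeriv u μ 0 = ∫ ω, u ω ∂μ := by
  simp [mgfDeriv]

lemma integrable_mul_exp_mul_of_nonpos (hu : Integrable u μ) (hu₀ : 0 ≤ᵐ[μ] u) {t : ℝ}
    (ht : t ≤ 0) : Integrable (fun ω => u ω * exp (t * u ω)) μ := by
  refine hu.mono' (hu.1.mul (continuous_exp.comp_aestronglyMeasurable (hu.1.const_mul t))) ?_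
  filter_upwards [hu₀] with ω hω
  rw [norm_mul, norm_of_nonneg (exp_pos _).le, norm_of_nonneg hω]
  exact mul_le_of_le_one_right hω (exp_le_one_iff.2 (mul_nonpos_of_nonpos_of_nonneg ht hω))

lemma mgfDeriv_pos [NeZero μ] (hu : Integrable u μ) (hu₀ : ∀ᵐ ω ∂μ, 0 < u ω) {t : ℝ}
    (ht : t ≤ 0) : 0 < mgfDeriv u μ t := by
  have hpos : ∀ᵐ ω ∂μ, 0 < u ω * exp (t * u ω) := by
    filter_upwards [hu₀] with ω hω
    positivity
  refine (integral_pos_iff_support_of_nonneg_ae (hpos.mono fun _ h => h.le)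
    (integrable_mul_exp_mul_of_nonpos hu (hu₀.mono fun _ h => h.le) ht)).2 ?_
  refine (Measure.measure_univ_pos.2 (NeZero.ne μ)).trans_le (measure_mono_ae ?_)
  filter_upwards [hpos] with ω hω _ using hω.ne'

lemma monotoneOn_mgfDeriv (hu : Integrable u μ) (hu₀ : 0 ≤ᵐ[μ] u) :
    MonotoneOn (mgfDeriv u μ) (Iic 0) := by
  intro s hs t ht hst
  refine integral_mono_ae (integrable_mul_exp_mul_of_nonpos hu hu₀ hs)
    (integrable_mul_exp_mul_of_nonpos hu hu₀ ht) ?_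
  filter_upwards [hu₀] with ω hω
  gcongr

theorem mgfDeriv_mul_mgfDeriv_le [SFinite μ] (hu : Integrable u μ) (hu₀ : 0 ≤ᵐ[μ] u)
    {s t : ℝ} (hs : s ≤ 0) (ht : t ≤ 0) :
    mgfDeriv u μ s * mgfDeriv u μ t ≤ mgfDeriv u μ 0 * mgfDeriv u μ (s + t) := by
  have hst : ∀ ω, exp (s * u ω) * exp (t * u ω) = exp ((s + t) * u ω) := fun ω => by
    rw [← exp_add, add_mul]
  have := (monovary_exp_mul_of_nonpos (u := u) hs ht).integral_mul_integral_le_integral_mul_integral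
    hu₀ hu (integrable_mul_exp_mul_of_nonpos hu hu₀ hs)
    (integrable_mul_exp_mul_of_nonpos hu hu₀ ht)
    (by simpa only [hst] using integrable_mul_exp_mul_of_nonpos hu hu₀ (add_nonpos hs ht))
  rw [mgfDeriv_zero]
  simpa only [mgfDeriv, hst] using this

theorem mgfDeriv_mul_mgfDeriv_le_of_add_le [SFinite μ] [NeZero μ] (hu : Integrable u μ)
    (hu₀ : ∀ᵐ ω ∂μ, 0 < u ω) {s t r : ℝ} (hs : s ≤ 0) (ht : t ≤ 0)
    (hr : s + t ≤ r) (hr₀ : r ≤ 0) :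
    mgfDeriv u μ s * mgfDeriv u μ t ≤ mgfDeriv u μ 0 * mgfDeriv u μ r := by
  have hu₀' : 0 ≤ᵐ[μ] u := hu₀.mono fun _ h => h.le
  calc mgfDeriv u μ s * mgfDeriv u μ t ≤ mgfDeriv u μ 0 * mgfDeriv u μ (s + t) :=
        mgfDeriv_mul_mgfDeriv_le hu hu₀' hs ht
    _ ≤ mgfDeriv u μ 0 * mgfDeriv u μ r := by
        gcongr
        · exact (mgfDeriv_pos hu hu₀ le_rfl).le
        · exact monotoneOn_mgfDeriv hu hu₀' (mem_Iic.2 (hr.trans hr₀)) (mem_Iic.2 hr₀) hr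

end MgfDeriv

section CompoundLaplace

variable {Ω : Type*} [MeasurableSpace Ω] {μ : Measure Ω} {u : Ω → ℝ}

noncomputable def compoundLaplacePDF (u : Ω → ℝ) (μ : Measure Ω) (m x : ℝ) : ℝ :=
  1 / 2 * ∫ ω, u ω * exp (-(u ω) * |x - m|) ∂μ

lemma compoundLaplacePDF_eq_mgfDeriv (m x : ℝ) :
    compoundLaplacePDF u μ m x = 1 / 2 * mgfDeriv u μ (-|x - m|) := by
  simp only [compoundLaplacePDF, mgfDeriv, neg_mul, mul_comm (u _) |x - m|]

lemma integrable_compoundLaplacePDF [IsFiniteMeasure μ] (hu : AEStronglyMeasurable u μ)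
    (hu₀ : ∀ᵐ ω ∂μ, 0 < u ω) (m : ℝ) : Integrable (compoundLaplacePDF u μ m) := by
  set F : ℝ × Ω → ℝ := fun p => u p.2 * exp (-(u p.2) * |p.1 - m|)
  have hF : AEStronglyMeasurable F (volume.prod μ) :=
    (Continuous.comp_aestronglyMeasurable₂ (g := fun (x y : ℝ) => y * exp (-y * |x - m|))
      (by fun_prop) measurable_fst.aestronglyMeasurable hu.comp_snd)
  have hnorm : ∀ᵐ ω ∂μ, ∫ x, ‖F (x, ω)‖ = 2 := by
    filter_upwards [hu₀] with ω hω
    have hF_nonneg (x : ℝ) : ‖F (x, ω)‖ = u ω * exp (-(u ω) * |x - m|) :=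
      norm_of_nonneg (by positivity)
    simp only [hF_nonneg, integral_const_mul, integral_exp_neg_mul_abs_sub hω]
    field_simp
  have hFi : Integrable F (volume.prod μ) := by
    refine (integrable_prod_iff' hF).2
      ⟨?_, (integrable_const 2).congr (hnorm.mono fun _ h => h.symm)⟩
    filter_upwards [hu₀] with ω hω
    exact (integrable_exp_neg_mul_abs_sub hω m).const_mul (u ω)
  exact hFi.integral_prod_left.const_mul _

lemma compoundLaplacePDF_le [SFinite μ] [NeZero μ] (hu : Integrable u μ)
    (hu₀ : ∀ᵐ ω ∂μ, 0 < u ω) {Δ m m' : ℝ} (hmm : |m - m'| ≤ Δ) (x : ℝ) :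
    compoundLaplacePDF u μ m x ≤
      (∫ ω, u ω ∂μ) / mgfDeriv u μ (-Δ) * compoundLaplacePDF u μ m' x := by
  have hΔ : -Δ ≤ 0 := neg_nonpos.2 ((abs_nonneg _).trans hmm)
  have hdist : -|x - m| + -Δ ≤ -|x - m'| := by linarith [abs_sub_le x m m']
  have hpos := mgfDeriv_pos hu hu₀ hΔ
  have hcorr : mgfDeriv u μ (-|x - m|) * mgfDeriv u μ (-Δ) ≤
      mgfDeriv u μ 0 * mgfDeriv u μ (-|x - m'|) :=
    mgfDeriv_mul_mgfDeriv_le_of_add_le hu hu₀ (neg_nonpos.2 (abs_nonneg _)) hΔ hdist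
      (neg_nonpos.2 (abs_nonneg _))
  rw [compoundLaplacePDF_eq_mgfDeriv, compoundLaplacePDF_eq_mgfDeriv, ← mgfDeriv_zero]
  calc 1 / 2 * mgfDeriv u μ (-|x - m|)
      = 1 / 2 * (mgfDeriv u μ (-|x - m|) * mgfDeriv u μ (-Δ)) / mgfDeriv u μ (-Δ) := by
        field_simp
    _ ≤ 1 / 2 * (mgfDeriv u μ 0 * mgfDeriv u μ (-|x - m'|)) / mgfDeriv u μ (-Δ) := by
        gcongr
    _ = mgfDeriv u μ 0 / mgfDeriv u μ (-Δ) * (1 / 2 * mgfDeriv u μ (-|x - m'|)) := by ring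

end CompoundLaplace

theorem r2dp_laplace_dp_general {Ω : Type*} [MeasurableSpace Ω] (μ : Measure Ω)
    [IsProbabilityMeasure μ] (u : Ω → ℝ)
    (hupos : ∀ᵐ ω ∂μ, 0 < u ω) (huint : Integrable u μ)
    (Δ : ℝ) (m m' : ℝ) (hmm : |m - m'| ≤ Δ)
    (S : Set ℝ) (hS : MeasurableSet S) :
    (∫ x in S, (1 / 2) * ∫ ω, u ω * Real.exp (-(u ω) * |x - m|) ∂μ) ≤
      ((∫ ω, u ω ∂μ) / (∫ ω, u ω * Real.exp (-Δ * u ω) ∂μ)) *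
        ∫ x in S, (1 / 2) * ∫ ω, u ω * Real.exp (-(u ω) * |x - m'|) ∂μ := by
  change ∫ x in S, compoundLaplacePDF u μ m x ≤
    (∫ ω, u ω ∂μ) / mgfDeriv u μ (-Δ) * ∫ x in S, compoundLaplacePDF u μ m' x
  rw [← integral_const_mul]
  exact setIntegral_mono_on (integrable_compoundLaplacePDF huint.1 hupos m).integrableOn
    ((integrable_compoundLaplacePDF huint.1 hupos m').const_mul _).integrableOn hS
    fun x _ => compoundLaplacePDF_le huint hupos hmm x

/-- The R²DP Laplace mechanism is `ln(E[1/b] / M'_{1/b}(-Δq))`-differentially private: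
for the compound Laplace density `g_m(x) = (1/2)·E[u·exp(-u·|x-m|)]` with `u = 1/b`,
the output probabilities on any measurable set differ by at most the factor
`E[u] / E[u·exp(-Δ·u)]`. -/
theorem r2dp_laplace_dp {Ω : Type*} [MeasurableSpace Ω] (μ : Measure Ω)
    [IsProbabilityMeasure μ] (u : Ω → ℝ) (hu : Measurable u)
    (hupos : ∀ᵐ ω ∂μ, 0 < u ω) (huint : Integrable u μ)
    (Δ : ℝ) (hΔ : 0 ≤ Δ) (m m' : ℝ) (hmm : |m - m'| ≤ Δ)
    (S : Set ℝ) (hS : MeasurableSet S) :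
    (∫ x in S, (1 / 2) * ∫ ω, u ω * Real.exp (-(u ω) * |x - m|) ∂μ) ≤
      ((∫ ω, u ω ∂μ) / (∫ ω, u ω * Real.exp (-Δ * u ω) ∂μ)) *
        ∫ x in S, (1 / 2) * ∫ ω, u ω * Real.exp (-(u ω) * |x - m'|) ∂μ :=
  r2dp_laplace_dp_general μ u hupos huint Δ m m' hmm S hS
end

section
/- Let (Ω, μ) be a probability space and u : Ω → ℝ measurable with u ≥ 0 μ-almost everywhere and u integrable, and let Δ ≥ 0. Then for all s ≤ t ≤ 0, E[u·exp(s·u)] · E[u·exp((t − Δ)·u)] ≤ E[u·exp(t·u)] · E[u·exp((s − Δ)·u)]. Equivalently, the ratio t ↦ E[u·exp(t·u)] / E[u·exp((t − Δ)·u)] is nondecreasing on (−∞, 0], so it is maximized at t = 0. -/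
open MeasureTheory Real

lemma key_pointwise (s t Δ x y : ℝ) (hst : s ≤ t) (hΔ : 0 ≤ Δ) (hx : 0 ≤ x) (hy : 0 ≤ y) :
    x * Real.exp (s * x) * (y * Real.exp ((t - Δ) * y)) +
      x * Real.exp ((t - Δ) * x) * (y * Real.exp (s * y)) ≤
    x * Real.exp (t * x) * (y * Real.exp ((s - Δ) * y)) +
      x * Real.exp ((s - Δ) * x) * (y * Real.exp (t * y)) := by
  have comb : ∀ a b c : ℝ, Real.exp a * Real.exp b * Real.exp c = Real.exp (a + b + c) := by
    intro a b c; rw [← Real.exp_add, ← Real.exp_add]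
  have e1 : Real.exp (t * x) * Real.exp ((s - Δ) * y) =
      Real.exp ((t - s) * x) * Real.exp (-Δ * y) * Real.exp (s * x + s * y) := by
    rw [comb, ← Real.exp_add]; congr 1; ring
  have e2 : Real.exp ((s - Δ) * x) * Real.exp (t * y) =
      Real.exp ((t - s) * y) * Real.exp (-Δ * x) * Real.exp (s * x + s * y) := by
    rw [comb, ← Real.exp_add]; congr 1; ring
  have e3 : Real.exp (s * x) * Real.exp ((t - Δ) * y) =
      Real.exp ((t - s) * y) * Real.exp (-Δ * y) * Real.exp (s * x + s * y) := by
    rw [comb, ← Real.exp_add]; congr 1; ring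
  have e4 : Real.exp ((t - Δ) * x) * Real.exp (s * y) =
      Real.exp ((t - s) * x) * Real.exp (-Δ * x) * Real.exp (s * x + s * y) := by
    rw [comb, ← Real.exp_add]; congr 1; ring
  have hid : x * Real.exp (t * x) * (y * Real.exp ((s - Δ) * y)) +
      x * Real.exp ((s - Δ) * x) * (y * Real.exp (t * y)) -
      (x * Real.exp (s * x) * (y * Real.exp ((t - Δ) * y)) +
        x * Real.exp ((t - Δ) * x) * (y * Real.exp (s * y)))
      = x * y * ((Real.exp ((t - s) * x) - Real.exp ((t - s) * y)) *
          (Real.exp (-Δ * y) - Real.exp (-Δ * x))) * Real.exp (s * x + s * y) := by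
    linear_combination (x * y) * e1 + (x * y) * e2 - (x * y) * e3 - (x * y) * e4
  have hsign : 0 ≤ (Real.exp ((t - s) * x) - Real.exp ((t - s) * y)) *
      (Real.exp (-Δ * y) - Real.exp (-Δ * x)) := by
    rcases le_total x y with h | h
    · have h1 : Real.exp ((t - s) * x) - Real.exp ((t - s) * y) ≤ 0 := by
        simp only [sub_nonpos, Real.exp_le_exp]
        exact mul_le_mul_of_nonneg_left h (by linarith)
      have h2 : Real.exp (-Δ * y) - Real.exp (-Δ * x) ≤ 0 := by
        simp only [sub_nonpos, Real.exp_le_exp]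
        nlinarith
      nlinarith
    · apply mul_nonneg
      · simp only [sub_nonneg, Real.exp_le_exp]
        exact mul_le_mul_of_nonneg_left h (by linarith)
      · simp only [sub_nonneg, Real.exp_le_exp]
        nlinarith
  nlinarith [mul_nonneg hx hy, Real.exp_pos (s * x + s * y),
    mul_nonneg (mul_nonneg (mul_nonneg hx hy) hsign) (Real.exp_pos (s * x + s * y)).le]

/-- The ratio `t ↦ E[u·exp(t·u)] / E[u·exp((t-Δ)·u)]` is nondecreasing on `(-∞, 0]`:
for `s ≤ t ≤ 0`, cross-multiplying,
`E[u·exp(s·u)]·E[u·exp((t-Δ)·u)] ≤ E[u·exp(t·u)]·E[u·exp((s-Δ)·u)]`. -/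
theorem mgf_deriv_ratio_monotone {Ω : Type*} [MeasurableSpace Ω] (μ : Measure Ω)
    [IsProbabilityMeasure μ] (u : Ω → ℝ) (hu : Measurable u)
    (hunn : ∀ᵐ ω ∂μ, 0 ≤ u ω) (huint : Integrable u μ)
    (Δ : ℝ) (hΔ : 0 ≤ Δ) (s t : ℝ) (hst : s ≤ t) (ht : t ≤ 0) :
    (∫ ω, u ω * Real.exp (s * u ω) ∂μ) * (∫ ω, u ω * Real.exp ((t - Δ) * u ω) ∂μ) ≤
      (∫ ω, u ω * Real.exp (t * u ω) ∂μ) * (∫ ω, u ω * Real.exp ((s - Δ) * u ω) ∂μ) := by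
  have hint : ∀ r : ℝ, r ≤ 0 → Integrable (fun ω => u ω * Real.exp (r * u ω)) μ := by
    intro r hr
    refine Integrable.mono huint
      ((hu.mul ((hu.const_mul r).exp)).aestronglyMeasurable) ?_
    filter_upwards [hunn] with ω hω
    rw [Real.norm_eq_abs, Real.norm_eq_abs, abs_of_nonneg hω,
      abs_of_nonneg (mul_nonneg hω (Real.exp_pos _).le)]
    calc u ω * Real.exp (r * u ω) ≤ u ω * 1 := by
          apply mul_le_mul_of_nonneg_left _ hω
          rw [Real.exp_le_one_iff]
          exact mul_nonpos_of_nonpos_of_nonneg hr hω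
      _ = u ω := mul_one _
  have hs0 : s ≤ 0 := hst.trans ht
  have hiS := hint s hs0
  have hiT := hint t ht
  have hiSΔ := hint (s - Δ) (by linarith)
  have hiTΔ := hint (t - Δ) (by linarith)
  -- product measure
  have hnn1 : ∀ᵐ p ∂(μ.prod μ), 0 ≤ u p.1 :=
    Measure.quasiMeasurePreserving_fst.ae hunn
  have hnn2 : ∀ᵐ p ∂(μ.prod μ), 0 ≤ u p.2 :=
    Measure.quasiMeasurePreserving_snd.ae hunn
  have key : ∫ p : Ω × Ω, (u p.1 * Real.exp (s * u p.1) * (u p.2 * Real.exp ((t - Δ) * u p.2)) +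
        u p.1 * Real.exp ((t - Δ) * u p.1) * (u p.2 * Real.exp (s * u p.2))) ∂(μ.prod μ) ≤
      ∫ p : Ω × Ω, (u p.1 * Real.exp (t * u p.1) * (u p.2 * Real.exp ((s - Δ) * u p.2)) +
        u p.1 * Real.exp ((s - Δ) * u p.1) * (u p.2 * Real.exp (t * u p.2))) ∂(μ.prod μ) := by
    refine integral_mono_ae ((hiS.mul_prod hiTΔ).add (hiTΔ.mul_prod hiS))
      ((hiT.mul_prod hiSΔ).add (hiSΔ.mul_prod hiT)) ?_
    filter_upwards [hnn1, hnn2] with p h1 h2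
    exact key_pointwise s t Δ (u p.1) (u p.2) hst hΔ h1 h2
  rw [integral_add (hiS.mul_prod hiTΔ) (hiTΔ.mul_prod hiS),
      integral_add (hiT.mul_prod hiSΔ) (hiSΔ.mul_prod hiT),
      integral_prod_mul (μ := μ) (ν := μ) (fun ω => u ω * Real.exp (s * u ω)) (fun ω => u ω * Real.exp ((t - Δ) * u ω)),
      integral_prod_mul (μ := μ) (ν := μ) (fun ω => u ω * Real.exp ((t - Δ) * u ω)) (fun ω => u ω * Real.exp (s * u ω)),
      integral_prod_mul (μ := μ) (ν := μ) (fun ω => u ω * Real.exp (t * u ω)) (fun ω => u ω * Real.exp ((s - Δ) * u ω)),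
      integral_prod_mul (μ := μ) (ν := μ) (fun ω => u ω * Real.exp ((s - Δ) * u ω)) (fun ω => u ω * Real.exp (t * u ω))] at key
  linarith
end

section
/- Let (Ω, μ) be a probability space and u : Ω → ℝ measurable with u ≥ 0 μ-almost everywhere, let Δ > 0, γ ≥ 0, and suppose exp(Δ·u) is integrable. If ε ≥ ln(E[exp(Δ·u)]), then E[exp(−γ·u)] ≥ exp(−γ·ε/Δ); equivalently, the usefulness 1 − E[exp(−γ·u)] of the R²DP Laplace mechanism is upper bounded by the usefulness 1 − exp(−γ·ε/Δ) of the ε-differentially private baseline Laplace mechanism with scale b = Δ/ε. -/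
open MeasureTheory Real

/-- If `ε ≥ ln(E[exp(Δ·u)])`, then the usefulness `1 - E[exp(-γ·u)]` of the R²DP Laplace
mechanism is upper bounded by the usefulness `1 - exp(-γ·ε/Δ)` of the `ε`-DP baseline
Laplace mechanism with scale `b = Δ/ε`; equivalently `exp(-γ·ε/Δ) ≤ E[exp(-γ·u)]`. -/
theorem r2dp_usefulness_bound {Ω : Type*} [MeasurableSpace Ω] (μ : Measure Ω)
    [IsProbabilityMeasure μ] (u : Ω → ℝ) (hu : Measurable u)
    (hunn : ∀ᵐ ω ∂μ, 0 ≤ u ω) (Δ γ ε : ℝ) (hΔ : 0 < Δ) (hγ : 0 ≤ γ)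
    (hint : Integrable (fun ω => Real.exp (Δ * u ω)) μ)
    (hε : Real.log (∫ ω, Real.exp (Δ * u ω) ∂μ) ≤ ε) :
    Real.exp (-(γ * ε / Δ)) ≤ ∫ ω, Real.exp (-γ * u ω) ∂μ := by
  have hu_int : Integrable u μ := by
    refine (hint.div_const Δ).mono' hu.aestronglyMeasurable ?_
    filter_upwards [hunn] with ω h
    rw [Real.norm_of_nonneg h, le_div_iff₀ hΔ]
    calc u ω * Δ = Δ * u ω := mul_comm _ _
      _ ≤ Real.exp (Δ * u ω) := by linarith [Real.add_one_le_exp (Δ * u ω)]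
  -- Jensen for Δ * u
  have hJ1 : Real.exp (∫ ω, Δ * u ω ∂μ) ≤ ∫ ω, Real.exp (Δ * u ω) ∂μ := by
    have := convexOn_exp.map_integral_le (f := fun ω => Δ * u ω) (μ := μ)
      continuous_exp.continuousOn isClosed_univ
      (ae_of_all _ fun _ => Set.mem_univ _) (hu_int.const_mul Δ) hint
    simpa using this
  have hipos : 0 < ∫ ω, Real.exp (Δ * u ω) ∂μ := lt_of_lt_of_le (Real.exp_pos _) hJ1
  have hDu : Δ * ∫ ω, u ω ∂μ ≤ ε := by
    have h1 : ∫ ω, Δ * u ω ∂μ ≤ ε :=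
      le_trans ((Real.le_log_iff_exp_le hipos).mpr hJ1) hε
    rwa [MeasureTheory.integral_const_mul] at h1
  -- integrability of exp(-γ u)
  have h2int : Integrable (fun ω => Real.exp (-γ * u ω)) μ := by
    refine (integrable_const (1 : ℝ)).mono'
      (Real.measurable_exp.comp ((measurable_const.mul hu))).aestronglyMeasurable ?_
    filter_upwards [hunn] with ω h
    rw [Real.norm_of_nonneg (Real.exp_pos _).le, Real.exp_le_one_iff]
    nlinarith
  -- Jensen for -γ * u
  have hJ2 : Real.exp (∫ ω, -γ * u ω ∂μ) ≤ ∫ ω, Real.exp (-γ * u ω) ∂μ := by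
    have := convexOn_exp.map_integral_le (f := fun ω => -γ * u ω) (μ := μ)
      continuous_exp.continuousOn isClosed_univ
      (ae_of_all _ fun _ => Set.mem_univ _) (hu_int.const_mul (-γ)) h2int
    simpa using this
  refine le_trans ?_ hJ2
  rw [MeasureTheory.integral_const_mul, Real.exp_le_exp]
  have hI : ∫ ω, u ω ∂μ ≤ ε / Δ := (le_div_iff₀' hΔ).mpr hDu
  have := mul_le_mul_of_nonneg_left hI hγ
  rw [neg_mul]
  rw [mul_div_assoc]
  linarith
end

section
/- For all real a ≥ 1, k ≥ 1, p ∈ [0, 1] and X with 0 < X ≤ 1, p·a·X + (1 − p)·(a·X)^k ≤ ( p·a + (1 − p)·a^k ) · ( p·X + (1 − p)·X^k ). Equivalently, the function X ↦ ( p·a·X + (1 − p)·(a·X)^k ) / ( p·X + (1 − p)·X^k ) on (0, 1] attains its maximum at X = 1, where it equals p·a + (1 − p)·a^k. -/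
open Real

/-- Key analytic lemma for the Bernoulli R²DP mechanism: for `a ≥ 1`, `k ≥ 1`, `p ∈ [0,1]`
and `0 < X ≤ 1`, the ratio `(p·a·X + (1-p)·(a·X)^k)/(p·X + (1-p)·X^k)` is maximized at
`X = 1`, where it equals `p·a + (1-p)·a^k`. -/
theorem bernoulli_ratio_max (a k p X : ℝ) (ha : 1 ≤ a) (hk : 1 ≤ k)
    (hp : p ∈ Set.Icc (0 : ℝ) 1) (hX0 : 0 < X) (hX1 : X ≤ 1) :
    p * a * X + (1 - p) * (a * X) ^ k ≤
      (p * a + (1 - p) * a ^ k) * (p * X + (1 - p) * X ^ k) := by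
  obtain ⟨hp0, hp1⟩ := hp
  have ha0 : (0:ℝ) < a := lt_of_lt_of_le one_pos ha
  rw [Real.mul_rpow ha0.le hX0.le]
  have h1 : a ≤ a ^ k := by
    calc a = a ^ (1:ℝ) := (Real.rpow_one a).symm
    _ ≤ a ^ k := Real.rpow_le_rpow_of_exponent_le ha hk
  have h2 : X ^ k ≤ X := by
    calc X ^ k ≤ X ^ (1:ℝ) := Real.rpow_le_rpow_of_exponent_ge hX0 hX1 hk
    _ = X := Real.rpow_one X
  have h3 : 0 < X ^ k := Real.rpow_pos_of_pos hX0 k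
  nlinarith [mul_nonneg hp0 (sub_nonneg.mpr hp1), mul_nonneg (sub_nonneg.mpr h1) (sub_nonneg.mpr h2), mul_nonneg (mul_nonneg hp0 (sub_nonneg.mpr hp1)) (mul_nonneg (sub_nonneg.mpr h1) (sub_nonneg.mpr h2))]
end

section
/- Let k > 0, θ > 0 and Δ ≥ 0, and define g_m(x) = (1/2) · ∫_0^∞ t · ( t^{k−1}·exp(−t/θ) / (Γ(k)·θ^k) ) · exp(−t·|x − m|) dt, i.e., the compound Laplace density whose inverse scale parameter is Gamma(k, θ)-distributed (explicitly g_m(x) = (k·θ/2)·(1 + θ·|x − m|)^{−(k+1)}). Then for all m, m' ∈ ℝ with |m − m'| ≤ Δ and every measurable S ⊆ ℝ, ∫_S g_m(x) dx ≤ (1 + θ·Δ)^{k+1} · ∫_S g_{m'}(x) dx. That is, the R²DP Laplace mechanism with Gamma-distributed reciprocal scale satisfies ( (k+1)·ln(1 + Δq·θ) )-differential privacy. -/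
/-!
Integrating out the Gamma-distributed reciprocal scale gives the closed form
`g_m(y) = (k θ / 2) (1 + θ |y - m|)^{-(k+1)}`, an integrable polynomially decaying density.
By the triangle inequality `1 + θ |y - m'| ≤ (1 + θ Δ) (1 + θ |y - m|)`, so
`g_m ≤ (1 + θ Δ)^{k+1} g_{m'}` pointwise, and the bound integrates over any set `S`.
-/

open MeasureTheory Real

lemma integral_Ioi_mul_gamma_pdf_mul_exp_neg_mul {k θ : ℝ} (hk : 0 < k) (hθ : 0 < θ) {c : ℝ}
    (hc : 0 < 1 + θ * c) :
    ∫ t in Set.Ioi (0 : ℝ),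
        t * (t ^ (k - 1) * exp (-t / θ) / (Gamma k * θ ^ k)) * exp (-t * c) =
      k * θ * (1 + θ * c) ^ (-(k + 1)) := by
  have hrate : 0 < θ⁻¹ + c := by
    rw [show θ⁻¹ + c = (1 + θ * c) / θ by field_simp]
    positivity
  have hintegrand : ∀ t ∈ Set.Ioi (0 : ℝ),
      t * (t ^ (k - 1) * exp (-t / θ) / (Gamma k * θ ^ k)) * exp (-t * c) =
        (Gamma k * θ ^ k)⁻¹ * (t ^ ((k + 1) - 1) * exp (-((θ⁻¹ + c) * t))) := by
    intro t ht
    rw [show (k + 1) - 1 = (k - 1) + 1 by ring, rpow_add_one (ne_of_gt ht),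
      show -((θ⁻¹ + c) * t) = -t / θ + -t * c by ring, exp_add]
    ring
  have hΓ : Gamma k ≠ 0 := (Gamma_pos_of_pos hk).ne'
  rw [setIntegral_congr_fun measurableSet_Ioi hintegrand, integral_const_mul,
    integral_rpow_mul_exp_neg_mul_Ioi (by linarith) hrate, Gamma_add_one hk.ne',
    show 1 / (θ⁻¹ + c) = θ / (1 + θ * c) by field_simp, div_rpow hθ.le hc.le,
    rpow_add_one hθ.ne', rpow_neg hc.le]
  field_simp

lemma integrable_one_add_mul_abs_sub_rpow_neg {θ p : ℝ} (hθ : 0 < θ) (hp : 1 < p) (m : ℝ) :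
    Integrable fun y : ℝ => (1 + θ * |y - m|) ^ (-p) := by
  have hdecay : Integrable fun x : ℝ => (1 + ‖x‖) ^ (-p) :=
    integrable_one_add_norm (by simpa using hp)
  have h := (hdecay.comp_mul_left' hθ.ne').comp_sub_right m
  simpa only [norm_eq_abs, abs_mul, abs_of_pos hθ] using h

lemma one_add_mul_abs_sub_le_mul {θ Δ m m' : ℝ} (hθ : 0 ≤ θ) (hmm : |m - m'| ≤ Δ)
    (y : ℝ) :
    1 + θ * |y - m'| ≤ (1 + θ * Δ) * (1 + θ * |y - m|) := by
  have htri : |y - m'| ≤ |y - m| + Δ := (abs_sub_le y m m').trans (by linarith)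
  have hcross : 0 ≤ θ * Δ * (θ * |y - m|) :=
    mul_nonneg (mul_nonneg hθ ((abs_nonneg _).trans hmm)) (mul_nonneg hθ (abs_nonneg _))
  nlinarith [mul_le_mul_of_nonneg_left htri hθ]

lemma one_add_mul_abs_sub_rpow_neg_le {θ Δ p m m' : ℝ} (hθ : 0 ≤ θ) (hp : 0 ≤ p)
    (hmm : |m - m'| ≤ Δ) (y : ℝ) :
    (1 + θ * |y - m|) ^ (-p) ≤ (1 + θ * Δ) ^ p * (1 + θ * |y - m'|) ^ (-p) := by
  have hΔ : 0 < 1 + θ * Δ := by nlinarith [(abs_nonneg _).trans hmm]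
  have hm : 0 < 1 + θ * |y - m| := by positivity
  have hm' : 0 < 1 + θ * |y - m'| := by positivity
  calc (1 + θ * |y - m|) ^ (-p)
      = (1 + θ * Δ) ^ p * ((1 + θ * Δ) * (1 + θ * |y - m|)) ^ (-p) := by
        rw [mul_rpow hΔ.le hm.le, ← mul_assoc, ← rpow_add hΔ, add_neg_cancel, rpow_zero,
          one_mul]
    _ ≤ (1 + θ * Δ) ^ p * (1 + θ * |y - m'|) ^ (-p) :=
        mul_le_mul_of_nonneg_left (rpow_le_rpow_of_nonpos hm'
          (one_add_mul_abs_sub_le_mul hθ hmm y) (neg_nonpos.mpr hp)) (rpow_nonneg hΔ.le p)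

theorem r2dp_gamma_dp_general (k θ Δ : ℝ) (hk : 0 < k) (hθ : 0 < θ)
    (m m' : ℝ) (hmm : |m - m'| ≤ Δ) (S : Set ℝ) :
    (∫ y in S, (1 / 2) * ∫ t in Set.Ioi (0 : ℝ),
        t * (t ^ (k - 1) * Real.exp (-t / θ) / (Real.Gamma k * θ ^ k)) *
          Real.exp (-t * |y - m|)) ≤
      (1 + θ * Δ) ^ (k + 1) *
        ∫ y in S, (1 / 2) * ∫ t in Set.Ioi (0 : ℝ),
          t * (t ^ (k - 1) * Real.exp (-t / θ) / (Real.Gamma k * θ ^ k)) *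
            Real.exp (-t * |y - m'|) := by
  have hdensity : ∀ a y : ℝ, (1 / 2) * ∫ t in Set.Ioi (0 : ℝ),
        t * (t ^ (k - 1) * exp (-t / θ) / (Gamma k * θ ^ k)) * exp (-t * |y - a|) =
      k * θ / 2 * (1 + θ * |y - a|) ^ (-(k + 1)) := fun a y => by
    rw [integral_Ioi_mul_gamma_pdf_mul_exp_neg_mul hk hθ (by positivity)]
    ring
  have hintegrable : ∀ a : ℝ,
      Integrable fun y => k * θ / 2 * (1 + θ * |y - a|) ^ (-(k + 1)) :=
    fun a => (integrable_one_add_mul_abs_sub_rpow_neg hθ (by linarith) a).const_mul _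
  simp only [hdensity]
  rw [← integral_const_mul]
  refine setIntegral_mono (hintegrable m).integrableOn
    ((hintegrable m').const_mul _).integrableOn fun y => ?_
  rw [mul_left_comm]
  exact mul_le_mul_of_nonneg_left
    (one_add_mul_abs_sub_rpow_neg_le hθ.le (by linarith) hmm y) (by positivity)

/-- The R²DP Laplace mechanism with Gamma(k, θ)-distributed reciprocal scale satisfies
`(k+1)·ln(1 + Δq·θ)`-differential privacy. -/
theorem r2dp_gamma_dp (k θ Δ : ℝ) (hk : 0 < k) (hθ : 0 < θ) (hΔ : 0 ≤ Δ)
    (m m' : ℝ) (hmm : |m - m'| ≤ Δ) (S : Set ℝ) (hS : MeasurableSet S) :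
    (∫ y in S, (1 / 2) * ∫ t in Set.Ioi (0 : ℝ),
        t * (t ^ (k - 1) * Real.exp (-t / θ) / (Real.Gamma k * θ ^ k)) *
          Real.exp (-t * |y - m|)) ≤
      (1 + θ * Δ) ^ (k + 1) *
        ∫ y in S, (1 / 2) * ∫ t in Set.Ioi (0 : ℝ),
          t * (t ^ (k - 1) * Real.exp (-t / θ) / (Real.Gamma k * θ ^ k)) *
            Real.exp (-t * |y - m'|) :=
  r2dp_gamma_dp_general k θ Δ hk hθ m m' hmm S
end

section
/- Let 0 < a < b, Δ > 0, and set α = a·Δ, β = b·Δ. Define g_m(x) = (1/(2(b − a))) · ∫_a^b t·exp(−t·|x − m|) dt, the compound Laplace density whose inverse scale parameter is uniformly distributed on [a, b]. Then for all m, m' ∈ ℝ with |m − m'| ≤ Δ and every measurable S ⊆ ℝ, ∫_S g_m(x) dx ≤ R · ∫_S g_{m'}(x) dx, where R = (β² − α²) / ( 2·( (1 + α)·exp(−α) − (1 + β)·exp(−β) ) ). That is, the R²DP Laplace mechanism with uniformly distributed reciprocal scale satisfies ln(R)-differential privacy. -/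
/-! For `s ≥ 0` put `K(s) = ∫_a^b t e^{-ts} dt`, so that `g_m(y) = K(|y - m|) / (2(b - a))`.
Since `t ↦ e^{-ts}` and `t ↦ e^{-td}` are both antitone, Chebyshev's integral inequality for
the weight `t dt` on `[a, b]` gives `K(s) K(d) ≤ K(0) K(s + d)`. With `K` antitone and
`| |y - m'| - |y - m| | ≤ Δ` this yields the pointwise bound
`K(|y - m|) ≤ K(0)/K(Δ) · K(|y - m'|)`, and `K(0)/K(Δ)` is the constant `R` of the statement.
Integrating over `S` finishes the proof. -/

section Chebyshev

open MeasureTheory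

variable {α : Type*} [MeasurableSpace α] {μ : Measure α} {w f g : α → ℝ}

/-- Weighted Chebyshev integral inequality. -/
theorem Monovary.integral_mul_integral_le (hfg : Monovary f g) (hw : 0 ≤ᵐ[μ] w)
    (hw_int : Integrable w μ) (hwf : Integrable (fun x ↦ w x * f x) μ)
    (hwg : Integrable (fun x ↦ w x * g x) μ)
    (hwfg : Integrable (fun x ↦ w x * (f x * g x)) μ) :
    (∫ x, w x * f x ∂μ) * (∫ x, w x * g x ∂μ) ≤
      (∫ x, w x ∂μ) * ∫ x, w x * (f x * g x) ∂μ := by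
  set W := ∫ x, w x ∂μ
  set F := ∫ x, w x * f x ∂μ
  set G := ∫ x, w x * g x ∂μ
  set H := ∫ x, w x * (f x * g x) ∂μ
  -- `∫∫ w(x) w(y) (f x - f y) (g x - g y) ≥ 0`, computed as an iterated integral
  have inner (x : α) :
      ∫ y, w y * ((f x - f y) * (g x - g y)) ∂μ = f x * g x * W - f x * G - g x * F + H := by
    have hexp : (fun y ↦ w y * ((f x - f y) * (g x - g y))) = fun y ↦
        f x * g x * w y - f x * (w y * g y) - g x * (w y * f y) + w y * (f y * g y) := by
      funext y; ring
    rw [hexp, integral_add, integral_sub, integral_sub, integral_const_mul, integral_const_mul,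
      integral_const_mul]
    all_goals fun_prop
  have outer :
      ∫ x, w x * (f x * g x * W - f x * G - g x * F + H) ∂μ = 2 * (W * H - F * G) := by
    have hexp : (fun x ↦ w x * (f x * g x * W - f x * G - g x * F + H)) = fun x ↦
        W * (w x * (f x * g x)) - G * (w x * f x) - F * (w x * g x) + H * w x := by
      funext x; ring
    rw [hexp, integral_add, integral_sub, integral_sub, integral_const_mul, integral_const_mul,
      integral_const_mul, integral_const_mul]
    · ring
    all_goals fun_prop
  have hnonneg : 0 ≤ ∫ x, w x * (f x * g x * W - f x * G - g x * F + H) ∂μ := by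
    refine integral_nonneg_of_ae ?_
    filter_upwards [hw] with x hx
    rw [← inner x]
    exact mul_nonneg hx <| integral_nonneg_of_ae <|
      hw.mono fun y hy ↦ mul_nonneg hy (hfg.sub_mul_sub_nonneg y x)
  linarith

end Chebyshev

open MeasureTheory Real intervalIntegral Set

theorem integrable_exp_neg_mul_abs {c : ℝ} (hc : 0 < c) :
    Integrable fun x : ℝ ↦ exp (-(c * |x|)) := by
  rw [← integrableOn_univ, ← Iic_union_Ioi (a := (0 : ℝ))]
  refine IntegrableOn.union ?_ ?_
  · refine (integrableOn_exp_mul_Iic hc 0).congr_fun (fun x hx ↦ ?_) measurableSet_Iic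
    rw [abs_of_nonpos hx, mul_neg, neg_neg]
  · refine (integrableOn_exp_mul_Ioi (neg_lt_zero.2 hc) 0).congr_fun (fun x hx ↦ ?_)
      measurableSet_Ioi
    beta_reduce
    rw [abs_of_pos hx, neg_mul]

/-- `compoundKernel a b s = (b - a) M'(-s)` for the moment generating function `M` of `U(a, b)`;
the compound Laplace density of the statement is
`g_m(y) = compoundKernel a b |y - m| / (2(b - a))`. -/
noncomputable def compoundKernel (a b s : ℝ) : ℝ := ∫ t in a..b, t * exp (-t * s)

namespace compoundKernel

variable {a b : ℝ}

theorem continuous (a b : ℝ) : Continuous (compoundKernel a b) :=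
  continuous_parametric_intervalIntegral_of_continuous' (f := fun s t ↦ t * exp (-t * s))
    (by fun_prop) a b

theorem pos (ha : 0 ≤ a) (hab : a < b) (s : ℝ) : 0 < compoundKernel a b s :=
  intervalIntegral_pos_of_pos_on ((by fun_prop : Continuous _).intervalIntegrable _ _)
    (fun t ht ↦ mul_pos (ha.trans_lt ht.1) (exp_pos _)) hab

theorem antitone (ha : 0 ≤ a) (hab : a ≤ b) : Antitone (compoundKernel a b) := by
  intro s s' hss'
  refine integral_mono_on hab ((by fun_prop : Continuous _).intervalIntegrable _ _)
    ((by fun_prop : Continuous _).intervalIntegrable _ _) fun t ht ↦ ?_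
  exact mul_le_mul_of_nonneg_left (exp_le_exp.2 (by nlinarith [ha.trans ht.1])) (ha.trans ht.1)

theorem zero (a b : ℝ) : compoundKernel a b 0 = (b ^ 2 - a ^ 2) / 2 := by
  simp [compoundKernel, integral_id]

theorem of_ne_zero (a b : ℝ) {s : ℝ} (hs : s ≠ 0) :
    compoundKernel a b s =
      ((1 + a * s) * exp (-(a * s)) - (1 + b * s) * exp (-(b * s))) / s ^ 2 := by
  have hderiv (t : ℝ) : HasDerivAt (fun t ↦ -((1 + t * s) * exp (-t * s)) / s ^ 2)
      (t * exp (-t * s)) t := by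
    refine ((((hasDerivAt_id' t).mul_const s).const_add 1).mul
      ((hasDerivAt_neg' t).mul_const s).exp).neg.div_const (s ^ 2) |>.congr_deriv ?_
    field_simp
    ring
  rw [compoundKernel, integral_eq_sub_of_hasDerivAt (fun t _ ↦ hderiv t)
    ((by fun_prop : Continuous _).intervalIntegrable _ _)]
  simp only [neg_mul]
  ring

theorem le_mul_exp (ha : 0 ≤ a) (hab : a ≤ b) {s : ℝ} (hs : 0 ≤ s) :
    compoundKernel a b s ≤ (b ^ 2 - a ^ 2) / 2 * exp (-(a * s)) := by
  rw [← integral_id, ← intervalIntegral.integral_mul_const]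
  refine integral_mono_on hab ((by fun_prop : Continuous _).intervalIntegrable _ _)
    ((by fun_prop : Continuous _).intervalIntegrable _ _) fun t ht ↦ ?_
  exact mul_le_mul_of_nonneg_left (exp_le_exp.2 (by nlinarith [ht.1])) (ha.trans ht.1)

theorem mul_le_mul_add (ha : 0 ≤ a) (hab : a ≤ b) {s d : ℝ} (hs : 0 ≤ s) (hd : 0 ≤ d) :
    compoundKernel a b s * compoundKernel a b d ≤
      compoundKernel a b 0 * compoundKernel a b (s + d) := by
  have hmono : Monovary (fun t : ℝ ↦ exp (-t * s)) (fun t ↦ exp (-t * d)) :=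
    Antitone.monovary (fun t t' h ↦ exp_le_exp.2 (by nlinarith))
      (fun t t' h ↦ exp_le_exp.2 (by nlinarith))
  have hint {f : ℝ → ℝ} (hf : Continuous f) : Integrable f (volume.restrict (Ioc a b)) :=
    hf.integrableOn_Ioc
  have key := hmono.integral_mul_integral_le (w := fun t ↦ t) (μ := volume.restrict (Ioc a b))
    ((ae_restrict_iff' measurableSet_Ioc).2 (ae_of_all _ fun t ht ↦ ha.trans ht.1.le))
    (hint (by fun_prop)) (hint (by fun_prop)) (hint (by fun_prop)) (hint (by fun_prop))
  have hexp_add (t : ℝ) : t * exp (-t * (s + d)) = t * (exp (-t * s) * exp (-t * d)) := by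
    rw [← exp_add]
    ring_nf
  simp only [compoundKernel, integral_of_le hab, hexp_add, mul_zero, exp_zero, mul_one]
  exact key

theorem mul_le_mul_of_sub_le (ha : 0 ≤ a) (hab : a < b) {s s' Δ : ℝ} (hs : 0 ≤ s)
    (hΔ : 0 ≤ Δ) (h : s' - Δ ≤ s) :
    compoundKernel a b s * compoundKernel a b Δ ≤
      compoundKernel a b 0 * compoundKernel a b s' := by
  have hanti := antitone ha hab.le
  have hpos := pos ha hab
  rcases le_total s' Δ with hs'Δ | hΔs'
  · exact mul_le_mul (hanti hs) (hanti hs'Δ) (hpos Δ).le (hpos 0).le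
  · calc compoundKernel a b s * compoundKernel a b Δ
        ≤ compoundKernel a b (s' - Δ) * compoundKernel a b Δ :=
          mul_le_mul_of_nonneg_right (hanti h) (hpos Δ).le
      _ ≤ compoundKernel a b 0 * compoundKernel a b s' := by
          simpa using mul_le_mul_add ha hab.le (sub_nonneg.2 hΔs') hΔ

theorem abs_sub_le (ha : 0 ≤ a) (hab : a < b) {m m' Δ : ℝ} (hmm : |m - m'| ≤ Δ) (y : ℝ) :
    compoundKernel a b |y - m| ≤
      compoundKernel a b 0 / compoundKernel a b Δ * compoundKernel a b |y - m'| := by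
  have hclose : |y - m'| - Δ ≤ |y - m| := by
    have := abs_sub_abs_le_abs_sub (y - m') (y - m)
    rw [sub_sub_sub_cancel_left] at this
    linarith
  rw [div_mul_eq_mul_div, le_div_iff₀ (pos ha hab Δ)]
  exact mul_le_mul_of_sub_le ha hab (abs_nonneg _) ((abs_nonneg _).trans hmm) hclose

theorem integrable_abs_sub (ha : 0 < a) (hab : a < b) (m : ℝ) :
    Integrable fun y ↦ compoundKernel a b |y - m| := by
  refine (((integrable_exp_neg_mul_abs ha).comp_sub_right m).const_mul
    ((b ^ 2 - a ^ 2) / 2)).mono' ((continuous a b).comp (by fun_prop)).aestronglyMeasurable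
    (ae_of_all _ fun y ↦ ?_)
  rw [norm_of_nonneg (pos ha.le hab _).le]
  exact le_mul_exp ha.le hab.le (abs_nonneg _)

theorem ratio_eq (a b : ℝ) {Δ : ℝ} (hΔ : Δ ≠ 0) (hK : compoundKernel a b Δ ≠ 0) :
    ((b * Δ) ^ 2 - (a * Δ) ^ 2) /
        (2 * ((1 + a * Δ) * exp (-(a * Δ)) - (1 + b * Δ) * exp (-(b * Δ)))) =
      compoundKernel a b 0 / compoundKernel a b Δ := by
  have hnum : (1 + a * Δ) * exp (-(a * Δ)) - (1 + b * Δ) * exp (-(b * Δ)) =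
      Δ ^ 2 * compoundKernel a b Δ := by
    rw [of_ne_zero a b hΔ]
    field_simp
  rw [hnum, zero]
  field_simp

end compoundKernel

theorem r2dp_uniform_dp_general (a b Δ : ℝ) (ha : 0 < a) (hab : a < b) (hΔ : 0 < Δ)
    (m m' : ℝ) (hmm : |m - m'| ≤ Δ) (S : Set ℝ) :
    (∫ y in S, (1 / (2 * (b - a))) * ∫ t in a..b, t * Real.exp (-t * |y - m|)) ≤
      ((b * Δ) ^ 2 - (a * Δ) ^ 2) /
          (2 * ((1 + a * Δ) * Real.exp (-(a * Δ)) - (1 + b * Δ) * Real.exp (-(b * Δ)))) *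
        ∫ y in S, (1 / (2 * (b - a))) * ∫ t in a..b, t * Real.exp (-t * |y - m'|) := by
  rw [compoundKernel.ratio_eq a b hΔ.ne' (compoundKernel.pos ha.le hab Δ).ne',
    ← MeasureTheory.integral_const_mul]
  have hc : 0 ≤ 1 / (2 * (b - a)) := by have := sub_pos.2 hab; positivity
  refine integral_mono ((compoundKernel.integrable_abs_sub ha hab m).const_mul _).restrict
    (((compoundKernel.integrable_abs_sub ha hab m').const_mul _).const_mul _).restrict fun y ↦ ?_
  rw [mul_left_comm]
  exact mul_le_mul_of_nonneg_left (compoundKernel.abs_sub_le ha.le hab hmm y) hc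

/-- The R²DP Laplace mechanism with uniformly distributed reciprocal scale on `[a, b]`
satisfies `ln R`-differential privacy, where (with `α = a·Δ`, `β = b·Δ`)
`R = (β² - α²) / (2·((1 + α)·exp(-α) - (1 + β)·exp(-β)))`. -/
theorem r2dp_uniform_dp (a b Δ : ℝ) (ha : 0 < a) (hab : a < b) (hΔ : 0 < Δ)
    (m m' : ℝ) (hmm : |m - m'| ≤ Δ) (S : Set ℝ) (hS : MeasurableSet S) :
    (∫ y in S, (1 / (2 * (b - a))) * ∫ t in a..b, t * Real.exp (-t * |y - m|)) ≤
      ((b * Δ) ^ 2 - (a * Δ) ^ 2) /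
          (2 * ((1 + a * Δ) * Real.exp (-(a * Δ)) - (1 + b * Δ) * Real.exp (-(b * Δ)))) *
        ∫ y in S, (1 / (2 * (b - a))) * ∫ t in a..b, t * Real.exp (-t * |y - m'|) :=
  r2dp_uniform_dp_general a b Δ ha hab hΔ m m' hmm S
end

section
/- Let Δ ≥ 0, ε > 0, δ ∈ (0, 1/2), and let K ≥ 0 satisfy Q(K) = δ, where Q(x) = ∫_x^∞ exp(−u²/2)/√(2π) du. If σ ≥ (Δ/(2ε))·(K + √(K² + 2ε)), then for all m, m' ∈ ℝ with |m − m'| ≤ Δ and every measurable set S ⊆ ℝ, the Gaussian measures N(m, σ²) and N(m', σ²) satisfy N(m, σ²)(S) ≤ exp(ε)·N(m', σ²)(S) + δ. (The Gaussian mechanism with this standard deviation is (ε, δ)-differentially private.) -/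
/-!
For `t = m - m'` the privacy loss `log (p_m x / p_m' x) = t (2x - m - m') / (2σ²)` is at most `ε`
outside a half-line `G`. On the complement of `G` the density of `N(m, σ²)` is at most `exp ε`
times that of `N(m', σ²)`, so `N(m, σ²) S ≤ exp ε · N(m', σ²) S + N(m, σ²) G`. Standardizing,
`N(m, σ²) G = Q((2εσ² - t²) / (2|t|σ))`, and the lower bound on `σ` is exactly what makes
`2K|t|σ + t² ≤ 2εσ²`, i.e. puts this threshold above `K`, so that `N(m, σ²) G ≤ Q(K) = δ`.
-/

open MeasureTheory ProbabilityTheory Real Set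
open scoped NNReal ENNReal

theorem measure_le_mul_add_compl_of_restrict_le {α : Type*} [MeasurableSpace α]
    {μ ν : Measure α} {G : Set α} {c : ℝ≥0∞} (h : μ.restrict G ≤ c • ν) (S : Set α) :
    μ S ≤ c * ν S + μ Gᶜ :=
  calc μ S ≤ μ (S ∩ G) + μ (S \ G) := measure_le_inter_add_sdiff μ S G
    _ ≤ c * ν S + μ Gᶜ := by
      gcongr
      · exact (Measure.le_restrict_apply G S).trans (h S)
      · exact sdiff_subset_compl S G

theorem gaussianPDFReal_le_exp_mul {m m' ε x : ℝ} {v : ℝ≥0} (hv : v ≠ 0)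
    (hx : (m - m') * (2 * x - m - m') ≤ 2 * ε * v) :
    gaussianPDFReal m v x ≤ exp ε * gaussianPDFReal m' v x := by
  have hv' : (0 : ℝ) < 2 * v := by positivity
  have hloss : -(x - m) ^ 2 / (2 * v) ≤ ε + -(x - m') ^ 2 / (2 * v) := by
    rw [← sub_le_iff_le_add, ← sub_div, div_le_iff₀ hv']
    linarith
  rw [gaussianPDFReal, gaussianPDFReal, mul_left_comm, ← Real.exp_add]
  gcongr

theorem gaussianReal_restrict_le_exp_smul {m m' ε : ℝ} {v : ℝ≥0} (hε : 0 ≤ ε) :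
    (gaussianReal m v).restrict {x | (m - m') * (2 * x - m - m') ≤ 2 * ε * v} ≤
      ENNReal.ofReal (exp ε) • gaussianReal m' v := by
  set G := {x : ℝ | (m - m') * (2 * x - m - m') ≤ 2 * ε * v}
  have hG : MeasurableSet G := measurableSet_le (by fun_prop) (by fun_prop)
  have hexp : 1 ≤ ENNReal.ofReal (exp ε) := by simpa using Real.one_le_exp hε
  rcases eq_or_ne v 0 with rfl | hv
  · classical
    rw [gaussianReal_zero_var, gaussianReal_zero_var, restrict_dirac]
    split_ifs with hm
    · obtain rfl : m = m' := by
        simp only [G, mem_ofPred_eq, NNReal.coe_zero, mul_zero] at hm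
        nlinarith
      exact Measure.le_iff'.2 fun s => le_mul_of_one_le_left' hexp
    · exact Measure.zero_le _
  rw [gaussianReal_of_var_ne_zero _ hv, gaussianReal_of_var_ne_zero _ hv,
    restrict_withDensity hG, ← withDensity_smul _ (measurable_gaussianPDF m' v)]
  calc (volume.restrict G).withDensity (gaussianPDF m v)
      ≤ (volume.restrict G).withDensity (ENNReal.ofReal (exp ε) • gaussianPDF m' v) := by
        refine withDensity_mono (ae_restrict_of_forall_mem hG fun x hx => ?_)
        simp only [gaussianPDF, Pi.smul_apply, smul_eq_mul]
        rw [← ENNReal.ofReal_mul (Real.exp_nonneg ε)]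
        exact ENNReal.ofReal_le_ofReal (gaussianPDFReal_le_exp_mul hv hx)
    _ ≤ _ := by
        rw [← restrict_withDensity hG]
        exact Measure.restrict_le_self

theorem gaussianReal_Ioi_sqrt_mul {v : ℝ≥0} (hv : v ≠ 0) (c : ℝ) :
    gaussianReal 0 v (Ioi (√v * c)) = gaussianReal 0 1 (Ioi c) := by
  have hs : 0 < √(v : ℝ) := by positivity
  have hstd : (gaussianReal 0 v).map (· / √v) = gaussianReal 0 1 := by
    rw [gaussianReal_map_div_const, zero_div]
    congr 1
    ext
    simp [Real.sq_sqrt, hv]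
  rw [← hstd, Measure.map_apply (by fun_prop) measurableSet_Ioi]
  congr 1
  ext x
  simp [lt_div_iff₀ hs, mul_comm]

theorem gaussianReal_tail_le {m m' ε K : ℝ} {v : ℝ≥0}
    (h : 2 * K * |m - m'| * √v + (m - m') ^ 2 ≤ 2 * ε * v) :
    gaussianReal m v {x | 2 * ε * v < (m - m') * (2 * x - m - m')} ≤
      gaussianReal 0 1 (Ioi K) := by
  set t := m - m'
  rcases eq_or_ne t 0 with ht | ht
  · have hempty : {x : ℝ | 2 * ε * v < t * (2 * x - m - m')} = ∅ := by
      ext x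
      simp only [ht, zero_mul, mem_ofPred_eq, mem_empty_iff_false, iff_false, not_lt]
      simpa [ht] using h
    simp [hempty]
  have hv : v ≠ 0 := by
    rintro rfl
    simp only [NNReal.coe_zero, Real.sqrt_zero, mul_zero, zero_add] at h
    exact ht (pow_eq_zero_iff two_ne_zero |>.1 (le_antisymm h (sq_nonneg t)))
  set w : ℝ≥0 := .mk (t ^ 2) (sq_nonneg t) * v
  have hw : w ≠ 0 := mul_ne_zero (by simpa [← NNReal.coe_ne_zero] using ht) hv
  have hsqrt : √(w : ℝ) = |t| * √v := by
    simp [w, Real.sqrt_mul (sq_nonneg t), Real.sqrt_sq_eq_abs]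
  have hpos : 0 < |t| * √v := by positivity
  have hmap : (gaussianReal m v).map (fun x => t * (x - m)) = gaussianReal 0 w := by
    rw [show (fun x => t * (x - m)) = (t * ·) ∘ (· - m) from rfl,
      ← Measure.map_map (by fun_prop) (by fun_prop), gaussianReal_map_sub_const, sub_self,
      gaussianReal_map_const_mul, mul_zero]
  have hset : {x | 2 * ε * v < t * (2 * x - m - m')} =
      (fun x => t * (x - m)) ⁻¹' Ioi ((2 * ε * v - t ^ 2) / 2) := by
    ext x
    simp only [mem_ofPred_eq, mem_preimage, mem_Ioi]
    constructor <;> intro <;> linarith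
  rw [hset, ← Measure.map_apply (by fun_prop) measurableSet_Ioi, hmap,
    ← mul_div_cancel₀ ((2 * ε * v - t ^ 2) / 2) hpos.ne', ← hsqrt,
    gaussianReal_Ioi_sqrt_mul hw, hsqrt]
  refine measure_mono (Ioi_subset_Ioi ?_)
  rw [le_div_iff₀ hpos]
  linarith

theorem gaussianReal_zero_one_Ioi (K : ℝ) :
    gaussianReal 0 1 (Ioi K) =
      ENNReal.ofReal (∫ u in Ioi K, exp (-u ^ 2 / 2) / √(2 * π)) := by
  rw [gaussianReal_apply_eq_integral 0 one_ne_zero]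
  congr 2 with u
  simp [gaussianPDFReal, div_eq_inv_mul]

theorem sq_add_two_mul_mul_le_of_le_sigma {Δ ε K σ : ℝ} (hΔ : 0 ≤ Δ) (hε : 0 < ε)
    (hσ : Δ / (2 * ε) * (K + √(K ^ 2 + 2 * ε)) ≤ σ) :
    2 * K * Δ * σ + Δ ^ 2 ≤ 2 * ε * σ ^ 2 := by
  set s := √(K ^ 2 + 2 * ε)
  have hs : s ^ 2 = K ^ 2 + 2 * ε := Real.sq_sqrt (by positivity)
  have hσ' : Δ * (K + s) ≤ 2 * ε * σ := by
    rwa [div_mul_eq_mul_div, div_le_iff₀ (by positivity), mul_comm σ] at hσ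
  have h₁ : 0 ≤ 2 * ε * σ - K * Δ - Δ * s := by linarith
  have h₂ : 0 ≤ 2 * ε * σ - K * Δ + Δ * s := by
    have : 0 ≤ Δ * s := mul_nonneg hΔ (Real.sqrt_nonneg _)
    linarith
  have hprod : (2 * ε * σ - K * Δ - Δ * s) * (2 * ε * σ - K * Δ + Δ * s) =
      2 * ε * (2 * ε * σ ^ 2 - (2 * K * Δ * σ + Δ ^ 2)) := by
    linear_combination (-Δ ^ 2) * hs
  have := (mul_nonneg h₁ h₂).trans_eq hprod
  nlinarith

theorem gaussian_mechanism_dp_general (Δ ε δ K σ : ℝ) (hΔ : 0 ≤ Δ) (hε : 0 < ε)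
    (hK : 0 ≤ K)
    (hQ : (∫ u in Set.Ioi K, Real.exp (-u ^ 2 / 2) / Real.sqrt (2 * Real.pi)) = δ)
    (hσ : Δ / (2 * ε) * (K + Real.sqrt (K ^ 2 + 2 * ε)) ≤ σ)
    (m m' : ℝ) (hmm : |m - m'| ≤ Δ) (S : Set ℝ) :
    (ProbabilityTheory.gaussianReal m ⟨σ ^ 2, sq_nonneg σ⟩) S ≤
      ENNReal.ofReal (Real.exp ε) *
        (ProbabilityTheory.gaussianReal m' ⟨σ ^ 2, sq_nonneg σ⟩) S +
        ENNReal.ofReal δ := by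
  set v : ℝ≥0 := ⟨σ ^ 2, sq_nonneg σ⟩
  have hσ₀ : 0 ≤ σ := le_trans (by positivity) hσ
  have hloss : 2 * K * |m - m'| * √v + (m - m') ^ 2 ≤ 2 * ε * v := by
    have hΔσ := sq_add_two_mul_mul_le_of_le_sigma hΔ hε hσ
    have hsq : (m - m') ^ 2 ≤ Δ ^ 2 := sq_le_sq' (abs_le.1 hmm).1 (abs_le.1 hmm).2
    have hlin : K * |m - m'| * σ ≤ K * Δ * σ := by gcongr
    rw [show (v : ℝ) = σ ^ 2 from rfl, Real.sqrt_sq hσ₀]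
    linarith
  have htail : gaussianReal m v {x | 2 * ε * v < (m - m') * (2 * x - m - m')} ≤
      ENNReal.ofReal δ := by
    rw [← hQ, ← gaussianReal_zero_one_Ioi]
    exact gaussianReal_tail_le hloss
  calc gaussianReal m v S
      ≤ ENNReal.ofReal (exp ε) * gaussianReal m' v S +
          gaussianReal m v {x | (m - m') * (2 * x - m - m') ≤ 2 * ε * v}ᶜ :=
        measure_le_mul_add_compl_of_restrict_le (gaussianReal_restrict_le_exp_smul hε.le) S
    _ ≤ _ := by
        gcongr
        simpa only [compl_ofPred, not_le] using htail

/-- The Gaussian mechanism with standard deviation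
`σ ≥ (Δ/(2ε))·(K + √(K² + 2ε))`, where `Q(K) = δ`, is `(ε, δ)`-differentially private. -/
theorem gaussian_mechanism_dp (Δ ε δ K σ : ℝ) (hΔ : 0 ≤ Δ) (hε : 0 < ε)
    (hδ : δ ∈ Set.Ioo (0 : ℝ) (1 / 2)) (hK : 0 ≤ K)
    (hQ : (∫ u in Set.Ioi K, Real.exp (-u ^ 2 / 2) / Real.sqrt (2 * Real.pi)) = δ)
    (hσ : Δ / (2 * ε) * (K + Real.sqrt (K ^ 2 + 2 * ε)) ≤ σ)
    (m m' : ℝ) (hmm : |m - m'| ≤ Δ) (S : Set ℝ) (hS : MeasurableSet S) :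
    (ProbabilityTheory.gaussianReal m ⟨σ ^ 2, sq_nonneg σ⟩) S ≤
      ENNReal.ofReal (Real.exp ε) *
        (ProbabilityTheory.gaussianReal m' ⟨σ ^ 2, sq_nonneg σ⟩) S +
        ENNReal.ofReal δ :=
  gaussian_mechanism_dp_general Δ ε δ K σ hΔ hε hK hQ hσ m m' hmm S
end
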